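/- For every integer r ≥ 3, the rainbow 2-connectivity of the complete bipartite graph K_{r,r} equals 3, i.e., rc_2(K_{r,r}) = 3. -/

import Mathlib

open SimpleGraph

/-- The complete bipartite graph `K_{r,r}` with both parts `Fin r`. -/
abbrev Krr (r : ℕ) : SimpleGraph (Fin r ⊕ Fin r) :=
  completeBipartiteGraph (Fin r) (Fin r)

/-- A walk is a rainbow path (w.r.t. edge-coloring `c`) if it is a path and
all its edges receive pairwise distinct colors. -/
def RainbowPath {V α : Type*} {G : SimpleGraph V} (c : Sym2 V → α) {u v : V}
    (p : G.Walk u v) : Prop :=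
  p.IsPath ∧ (p.edges.map c).Nodup

/-- Two `u`-`v` walks are internally disjoint if they share no vertices other
than `u` and `v`. -/
def IntDisjoint {V : Type*} {G : SimpleGraph V} {u v : V}
    (p q : G.Walk u v) : Prop :=
  ∀ x, x ∈ p.support → x ∈ q.support → x = u ∨ x = v

/-- `G` admits a `j`-edge-coloring under which every two distinct vertices are
joined by at least `k` internally disjoint rainbow paths. -/
def HasRainbowKColoring {V : Type*} (G : SimpleGraph V) (k j : ℕ) : Prop :=
  ∃ c : Sym2 V → Fin j, ∀ u v : V, u ≠ v →
    ∃ P : Fin k → G.Walk u v, Function.Injective P ∧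
      (∀ i, RainbowPath c (P i)) ∧
      ∀ i i', i ≠ i' → IntDisjoint (P i) (P i')

/-- The rainbow `k`-connectivity: the least number of colors as above. -/
noncomputable def rck {V : Type*} (G : SimpleGraph V) (k : ℕ) : ℕ :=
  sInf {j | HasRainbowKColoring G k j}

/-! The lower bound holds because any walk between the two sides of a bipartite graph has odd
length, while a rainbow path uses at most as many edges as there are colours: with two colours
the edge `ab` is the only rainbow `a`-`b` path.

For the upper bound, linearly order the index set and colour the edge between `i` on the left
and `j` on the right by `compare i j`. Two vertices `a ≠ a'` on the same side are joined by `a, a, a'` and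
`a, a', a'`, each made of one diagonal and one off-diagonal edge. For `a` and `b` on opposite
sides, the edge `ab` is completed by a path of length three through a third index `x`, with one
diagonal edge and two off-diagonal edges oriented so that `compare` differs on them. -/

open Walk

lemma Ordering.swap_eq_self_iff {o : Ordering} : o.swap = o ↔ o = .eq := by
  cases o <;> decide

section Walks

variable {V α : Type*} {G : SimpleGraph V} {u v : V}

lemma IntDisjoint.symm {p q : G.Walk u v} (h : IntDisjoint p q) : IntDisjoint q p :=
  fun x hq hp => h x hp hq

lemma RainbowPath.length_le_card [Fintype α] {c : Sym2 V → α} {p : G.Walk u v}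
    (h : RainbowPath c p) : p.length ≤ Fintype.card α := by
  simpa using h.2.length_le_card

lemma rainbowPath_cons_nil (c : Sym2 V → α) (h : G.Adj u v) :
    RainbowPath c (cons h nil : G.Walk u v) := by
  simp [RainbowPath, isPath_def, h.ne]

lemma rainbowPath_length_two (c : Sym2 V → α) {w : V} (h₁ : G.Adj u w) (h₂ : G.Adj w v)
    (huv : u ≠ v) (hc : c s(u, w) ≠ c s(w, v)) : RainbowPath c (cons h₁ (cons h₂ nil)) := by
  simp [RainbowPath, isPath_def, h₁.ne, h₂.ne, huv, hc]

lemma rainbowPath_length_three (c : Sym2 V → α) {w x : V} (h₁ : G.Adj u w) (h₂ : G.Adj w x)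
    (h₃ : G.Adj x v) (hux : u ≠ x) (hwv : w ≠ v) (huv : u ≠ v)
    (hc₁ : c s(u, w) ≠ c s(w, x)) (hc₂ : c s(u, w) ≠ c s(x, v)) (hc₃ : c s(w, x) ≠ c s(x, v)) :
    RainbowPath c (cons h₁ (cons h₂ (cons h₃ nil))) := by
  simp [RainbowPath, isPath_def, h₁.ne, h₂.ne, h₃.ne, hux, hwv, huv, hc₁, hc₂, hc₃]

lemma intDisjoint_cons_nil (h : G.Adj u v) (q : G.Walk u v) : IntDisjoint (cons h nil) q := by
  intro x hx _
  simpa using hx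

lemma intDisjoint_length_two {w w' : V} (h₁ : G.Adj u w) (h₂ : G.Adj w v) (h₁' : G.Adj u w')
    (h₂' : G.Adj w' v) (hw : w ≠ w') :
    IntDisjoint (cons h₁ (cons h₂ nil)) (cons h₁' (cons h₂' nil)) := by
  intro x hx hx'
  simp only [support_cons, support_nil, List.mem_cons, List.not_mem_nil, or_false] at hx hx'
  rcases hx with rfl | rfl | rfl <;> rcases hx' with h | h | h <;> simp_all

end Walks

section RainbowJoined

variable {V α : Type*}

def RainbowJoined (G : SimpleGraph V) (c : Sym2 V → α) (k : ℕ) (u v : V) : Prop :=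
  ∃ P : Fin k → G.Walk u v, Function.Injective P ∧ (∀ i, RainbowPath c (P i)) ∧
    ∀ i i', i ≠ i' → IntDisjoint (P i) (P i')

variable {G : SimpleGraph V} {c : Sym2 V → α} {k : ℕ} {u v : V}

lemma RainbowJoined.symm (h : RainbowJoined G c k u v) : RainbowJoined G c k v u := by
  obtain ⟨P, hinj, hrb, hdisj⟩ := h
  refine ⟨fun i => (P i).reverse, fun i i' h => hinj (reverse_injective h), fun i => ?_,
    fun i i' hi x hx hx' => ?_⟩
  · exact ⟨(hrb i).1.reverse, by simpa [edges_reverse, List.map_reverse] using (hrb i).2⟩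
  · rw [support_reverse, List.mem_reverse] at hx hx'
    exact (hdisj i i' hi x hx hx').symm

lemma rainbowJoined_two_of_pair {p q : G.Walk u v} (hpq : p ≠ q) (hp : RainbowPath c p)
    (hq : RainbowPath c q) (hd : IntDisjoint p q) : RainbowJoined G c 2 u v := by
  refine ⟨![p, q], ?_, ?_, ?_⟩
  · intro i i' h
    fin_cases i <;> fin_cases i' <;> simp_all [eq_comm]
  · intro i
    fin_cases i <;> assumption
  · intro i i' hi
    fin_cases i <;> fin_cases i' <;> simp_all [hd.symm]

end RainbowJoined

lemma rck_eq_of_hasRainbowKColoring {V : Type*} {G : SimpleGraph V} {k j : ℕ}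
    (h : HasRainbowKColoring G k j) (hlt : ∀ i < j, ¬ HasRainbowKColoring G k i) : rck G k = j :=
  le_antisymm (Nat.sInf_le h) (le_csInf ⟨j, h⟩ fun i hi => not_lt.1 fun hij => hlt i hij hi)

namespace completeBipartiteGraph

variable {α β : Type*}

lemma adj_inl_inr (i : α) (j : β) : (completeBipartiteGraph α β).Adj (.inl i) (.inr j) := by simp

lemma adj_inr_inl (i : α) (j : β) : (completeBipartiteGraph α β).Adj (.inr j) (.inl i) := by simp

lemma walk_eq_of_length_le_two {a : α} {b : β}
    (p : (completeBipartiteGraph α β).Walk (.inl a) (.inr b)) (hp : p.length ≤ 2) :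
    p = cons (adj_inl_inr a b) nil := by
  match p with
  | cons (v := .inr _) _ nil => rfl
  | cons (v := .inr _) _ (cons (v := .inl _) _ (cons _ _)) => simp at hp
  | cons (v := .inl _) h _ => simp at h
  | cons (v := .inr _) _ (cons (v := .inr _) h _) => simp at h

lemma not_hasRainbowKColoring [Nonempty α] [Nonempty β] {k j : ℕ} (hk : 2 ≤ k) (hj : j ≤ 2) :
    ¬ HasRainbowKColoring (completeBipartiteGraph α β) k j := by
  rintro ⟨c, hc⟩
  obtain ⟨a⟩ := ‹Nonempty α›
  obtain ⟨b⟩ := ‹Nonempty β›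
  obtain ⟨P, hinj, hrb, -⟩ := hc (.inl a) (.inr b) Sum.inl_ne_inr
  have hP : ∀ i, P i = cons (adj_inl_inr a b) nil := fun i =>
    walk_eq_of_length_le_two _ (((hrb i).length_le_card).trans (by simpa using hj))
  have := hinj ((hP ⟨0, by omega⟩).trans (hP ⟨1, by omega⟩).symm)
  simp at this

def orderingColor : Ordering → Fin 3
  | .lt => 0
  | .eq => 1
  | .gt => 2

@[simp]
lemma orderingColor_inj {o o' : Ordering} : orderingColor o = orderingColor o' ↔ o = o' := by
  cases o <;> cases o' <;> decide

section OrderColoring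

variable [LinearOrder α]

def orderColoring : Sym2 (α ⊕ α) → Fin 3 :=
  Sym2.lift ⟨fun
    | .inl i, .inr j | .inr j, .inl i => orderingColor (compare i j)
    | _, _ => 0, by rintro (i | i) (j | j) <;> rfl⟩

@[simp]
lemma orderColoring_inl_inr (i j : α) :
    orderColoring s(.inl i, .inr j) = orderingColor (compare i j) := rfl

@[simp]
lemma orderColoring_inr_inl (i j : α) :
    orderColoring s(.inr j, .inl i) = orderingColor (compare i j) := rfl

lemma rainbowJoined_inl_inl {a a' : α} (h : a ≠ a') :
    RainbowJoined (completeBipartiteGraph α α) orderColoring 2 (.inl a) (.inl a') := by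
  refine rainbowJoined_two_of_pair (p := cons (adj_inl_inr a a) (cons (adj_inr_inl a' a) nil))
    (q := cons (adj_inl_inr a a') (cons (adj_inr_inl a' a') nil)) ?_
    (rainbowPath_length_two _ _ _ (by simpa using h) ?_)
    (rainbowPath_length_two _ _ _ (by simpa using h) ?_)
    (intDisjoint_length_two _ _ _ _ (by simpa using h))
  · intro hpq
    simpa [h] using congrArg Walk.support hpq
  all_goals simp [eq_comm (a := Ordering.eq), h, Ne.symm h]

lemma rainbowJoined_inr_inr {b b' : α} (h : b ≠ b') :
    RainbowJoined (completeBipartiteGraph α α) orderColoring 2 (.inr b) (.inr b') := by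
  refine rainbowJoined_two_of_pair (p := cons (adj_inr_inl b b) (cons (adj_inl_inr b b') nil))
    (q := cons (adj_inr_inl b' b) (cons (adj_inl_inr b' b') nil)) ?_
    (rainbowPath_length_two _ _ _ (by simpa using h) ?_)
    (rainbowPath_length_two _ _ _ (by simpa using h) ?_)
    (intDisjoint_length_two _ _ _ _ (by simpa using h))
  · intro hpq
    simpa [h] using congrArg Walk.support hpq
  all_goals simp [eq_comm (a := Ordering.eq), h, Ne.symm h]

/-- Besides the edge `ab`, take a third vertex `x`: the path `a, x, x, b` is rainbow unless `x` lies
strictly between `a` and `b`, and then `a, a, x, b` is. -/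
lemma rainbowJoined_inl_inr (hα : 3 ≤ ENat.card α) (a b : α) :
    RainbowJoined (completeBipartiteGraph α α) orderColoring 2 (.inl a) (.inr b) := by
  obtain ⟨x, hxa, hxb⟩ := ENat.exists_ne_ne_of_three_le hα a b
  have hne : ∀ q : (completeBipartiteGraph α α).Walk (.inl a) (.inr b), q.length = 3 →
      cons (adj_inl_inr a b) nil ≠ q := fun q hq h => by simp [← h] at hq
  by_cases hbetween : compare a x = compare x b
  · have hxab : compare x a ≠ compare x b := by
      rw [Std.OrientedOrd.eq_swap (a := x), hbetween]
      exact mt Ordering.swap_eq_self_iff.1 (mt compare_eq_iff_eq.1 hxb)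
    have hab : a ≠ b := by
      rintro rfl
      rw [Std.OrientedOrd.eq_swap (a := x)] at hbetween
      exact hxa (compare_eq_iff_eq.1 (Ordering.swap_eq_self_iff.1 hbetween.symm)).symm
    exact rainbowJoined_two_of_pair (hne _ rfl) (rainbowPath_cons_nil _ _)
      (rainbowPath_length_three _ (adj_inl_inr a a) (adj_inr_inl x a) (adj_inl_inr x b)
        (by simpa using hxa.symm) (by simpa using hab) Sum.inl_ne_inr
        (by simpa [eq_comm (a := Ordering.eq)] using hxa)
        (by simpa [eq_comm (a := Ordering.eq)] using hxb)
        (by simpa using hxab))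
      (intDisjoint_cons_nil _ _)
  · exact rainbowJoined_two_of_pair (hne _ rfl) (rainbowPath_cons_nil _ _)
      (rainbowPath_length_three _ (adj_inl_inr a x) (adj_inr_inl x x) (adj_inl_inr x b)
        (by simpa using hxa.symm) (by simpa using hxb) Sum.inl_ne_inr
        (by simpa using hxa.symm)
        (by simpa using hbetween)
        (by simpa [eq_comm (a := Ordering.eq)] using hxb))
      (intDisjoint_cons_nil _ _)

end OrderColoring

lemma hasRainbowKColoring_two_three (hα : 3 ≤ ENat.card α) :
    HasRainbowKColoring (completeBipartiteGraph α α) 2 3 := by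
  let : LinearOrder α := WellOrderingRel.isWellOrder.linearOrder
  refine ⟨orderColoring, ?_⟩
  rintro (a | a) (b | b) hab
  · exact rainbowJoined_inl_inl (by simpa using hab)
  · exact rainbowJoined_inl_inr hα a b
  · exact (rainbowJoined_inl_inr hα b a).symm
  · exact rainbowJoined_inr_inr (by simpa using hab)

end completeBipartiteGraph

theorem stmt2 (r : ℕ) (hr : 3 ≤ r) : rck (Krr r) 2 = 3 := by
  have : Nonempty (Fin r) := ⟨⟨0, by omega⟩⟩
  refine rck_eq_of_hasRainbowKColoring ?_ fun j hj => ?_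
  · exact completeBipartiteGraph.hasRainbowKColoring_two_three (by simpa using hr)
  · exact completeBipartiteGraph.not_hasRainbowKColoring le_rfl (by omega)
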